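/- For each j ∈ ℕ let G_j be a locally compact Hausdorff topological space and let p_j : G_{j+1} → G_j be a continuous proper map. Then for every compactly supported continuous function f : Ḡ → ℂ on the inverse limit Ḡ there exists a compact set K ⊆ Ḡ containing the support of f such that for every ε > 0 there exist j ∈ ℕ and a compactly supported continuous function g : G_j → ℂ with the support of g ∘ p_j^∞ contained in K and sup_{x ∈ Ḡ} |f(x) − g(p_j^∞(x))| < ε. In other words, the union over j of the pullbacks of C_c(G_j) under the projections is dense in C_c(Ḡ) in the inductive limit topology. -/

import Mathlib

/-! Let `χ` be a compactly supported Urysohn function on `G 0` equal to `1` on the image of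
`tsupport f`, and `K` the set of threads whose `0`-th coordinate lies in `tsupport χ`. Properness
of the bonding maps makes every coordinate of `K` range in a compact set, so `K` is compact by
Tychonoff. On `K` the pullbacks of `C(G j, ℂ)` form an increasing chain of star subalgebras whose
union separates points, so Stone–Weierstrass approximates `f` on `K` by some `g ∘ p_j^∞`; replacing
`g` by `(χ ∘ π) * g`, where `π : G j → G 0` is the composite bonding map, makes it compactly
supported without increasing the error. -/

/-- The inverse limit of an inverse sequence of topological spaces, as a subspace of the
product space. -/
abbrev InverseLimit (G : ℕ → Type*) (p : ∀ j, G (j + 1) → G j) : Type _ :=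
  { x : ∀ j, G j // ∀ j, p j (x (j + 1)) = x j }

open Set Topology

namespace InverseLimit

variable {G : ℕ → Type*} {p : ∀ j, G (j + 1) → G j}

variable (p) in
def toLevelZero : ∀ j, G j → G 0
  | 0 => id
  | j + 1 => toLevelZero j ∘ p j

theorem toLevelZero_apply (x : InverseLimit G p) : ∀ j, toLevelZero p j (x.1 j) = x.1 0
  | 0 => rfl
  | j + 1 => by
    rw [toLevelZero, Function.comp_apply, x.2 j]
    exact toLevelZero_apply x j

variable [∀ j, TopologicalSpace (G j)]

theorem continuous_toLevelZero (hpc : ∀ j, Continuous (p j)) : ∀ j, Continuous (toLevelZero p j)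
  | 0 => continuous_id
  | j + 1 => (continuous_toLevelZero hpc j).comp (hpc j)

theorem isCompact_preimage_toLevelZero
    (hpp : ∀ j, ∀ K : Set (G j), IsCompact K → IsCompact (p j ⁻¹' K))
    {T : Set (G 0)} (hT : IsCompact T) : ∀ j, IsCompact (toLevelZero p j ⁻¹' T)
  | 0 => hT
  | j + 1 => hpp j _ (isCompact_preimage_toLevelZero hpp hT j)

@[fun_prop]
theorem continuous_proj (j : ℕ) : Continuous fun x : InverseLimit G p => x.1 j :=
  (continuous_apply j).comp continuous_subtype_val

theorem isClosed_setOf_compatible [∀ j, T2Space (G j)] (hpc : ∀ j, Continuous (p j)) :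
    IsClosed {y : ∀ j, G j | ∀ j, p j (y (j + 1)) = y j} := by
  simp only [ofPred_forall]
  exact isClosed_iInter fun j =>
    isClosed_eq ((hpc j).comp (continuous_apply _)) (continuous_apply j)

theorem isCompact_proj_zero_preimage [∀ j, T2Space (G j)] (hpc : ∀ j, Continuous (p j))
    (hpp : ∀ j, ∀ K : Set (G j), IsCompact K → IsCompact (p j ⁻¹' K))
    {T : Set (G 0)} (hT : IsCompact T) : IsCompact {x : InverseLimit G p | x.1 0 ∈ T} := by
  have hK : {x : InverseLimit G p | x.1 0 ∈ T} =
      Subtype.val ⁻¹' univ.pi fun j => toLevelZero p j ⁻¹' T := by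
    ext x
    simp only [mem_ofPred_eq, mem_preimage, mem_univ_pi, toLevelZero_apply x]
    exact ⟨fun h _ => h, fun h => h 0⟩
  rw [hK]
  exact (isClosed_setOf_compatible hpc).isClosedEmbedding_subtypeVal.isCompact_preimage
    (isCompact_univ_pi (isCompact_preimage_toLevelZero hpp hT))

variable (K : Set (InverseLimit G p))

def projOn (j : ℕ) : C(K, G j) :=
  ⟨fun x => x.1.1 j, (continuous_proj j).comp continuous_subtype_val⟩

noncomputable def levelSubalgebra (j : ℕ) : StarSubalgebra ℂ C(K, ℂ) :=
  (ContinuousMap.compStarAlgHom' ℂ ℂ (projOn K j)).range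

theorem mem_levelSubalgebra {j : ℕ} {φ : C(K, ℂ)} :
    φ ∈ levelSubalgebra K j ↔ ∃ g : C(G j, ℂ), ∀ x : K, g (x.1.1 j) = φ x := by
  show (∃ g, ContinuousMap.compStarAlgHom' ℂ ℂ (projOn K j) g = φ) ↔ _
  exact exists_congr fun g => ContinuousMap.ext_iff

theorem levelSubalgebra_mono (hpc : ∀ j, Continuous (p j)) : Monotone (levelSubalgebra K) := by
  refine monotone_nat_of_le_succ fun j φ hφ => ?_
  obtain ⟨g, hg⟩ := (mem_levelSubalgebra K).1 hφ
  exact (mem_levelSubalgebra K).2 ⟨g.comp ⟨p j, hpc j⟩, fun x => by simp [x.1.2 j, hg]⟩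

theorem separatesPoints_iSup_levelSubalgebra [∀ j, LocallyCompactSpace (G j)]
    [∀ j, T2Space (G j)] : (⨆ j, levelSubalgebra K j).SeparatesPoints := by
  intro x y hxy
  obtain ⟨j, hj⟩ : ∃ j, x.1.1 j ≠ y.1.1 j := by
    by_contra! h
    exact hxy (Subtype.ext (Subtype.ext (funext h)))
  obtain ⟨χ, hχx, hχy, -, -⟩ := exists_continuous_one_zero_of_isCompact
    isCompact_singleton isClosed_singleton (disjoint_singleton.2 hj)
  have hx1 : χ (x.1.1 j) = 1 := hχx rfl
  have hy0 : χ (y.1.1 j) = 0 := hχy rfl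
  let g : C(G j, ℂ) := ⟨fun z => χ z, by fun_prop⟩
  refine ⟨_, ⟨g.comp (projOn K j), ?_, rfl⟩, ?_⟩
  · exact le_iSup (levelSubalgebra K) j ((mem_levelSubalgebra K).2 ⟨g, fun _ => rfl⟩)
  · simp [g, projOn, hx1, hy0]

theorem exists_level_approx [∀ j, LocallyCompactSpace (G j)] [∀ j, T2Space (G j)]
    (hpc : ∀ j, Continuous (p j)) [CompactSpace K] (f : C(K, ℂ)) {ε : ℝ} (hε : 0 < ε) :
    ∃ (j : ℕ) (g : C(G j, ℂ)), ∀ x : K, ‖f x - g (x.1.1 j)‖ < ε := by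
  have hf : f ∈ closure ((⨆ j, levelSubalgebra K j : StarSubalgebra ℂ C(K, ℂ)) : Set _) := by
    have := ContinuousMap.starSubalgebra_topologicalClosure_eq_top_of_separatesPoints _
      (separatesPoints_iSup_levelSubalgebra K)
    rw [← StarSubalgebra.topologicalClosure_coe, this]
    trivial
  obtain ⟨φ, hφ, hfφ⟩ := Metric.mem_closure_iff.1 hf ε hε
  rw [StarSubalgebra.coe_iSup_of_directed (levelSubalgebra_mono K hpc).directed_le,
    mem_iUnion] at hφ
  obtain ⟨j, hφ⟩ := hφ
  obtain ⟨g, hg⟩ := (mem_levelSubalgebra K).1 hφ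
  refine ⟨j, g, fun x => ?_⟩
  rw [hg, ← dist_eq_norm]
  exact (ContinuousMap.dist_apply_le_dist x).trans_lt hfφ

end InverseLimit

theorem norm_sub_mul_lt_of_eqOn_one {X : Type*} {f g χ : X → ℂ} {ε : ℝ} (hε : 0 < ε)
    (hχ : ∀ x, ‖χ x‖ ≤ 1) (hχf : EqOn χ 1 (Function.support f))
    (hfg : ∀ x ∈ Function.support χ, ‖f x - g x‖ < ε) (x : X) :
    ‖f x - χ x * g x‖ < ε := by
  have hf : f x = χ x * f x := by
    by_cases hx : f x = 0
    · simp [hx]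
    · simp [hχf hx]
  rw [show f x - χ x * g x = χ x * (f x - g x) by rw [mul_sub, ← hf], norm_mul]
  by_cases hx : χ x = 0
  · simpa [hx] using hε
  calc ‖χ x‖ * ‖f x - g x‖ ≤ ‖f x - g x‖ := mul_le_of_le_one_left (norm_nonneg _) (hχ x)
    _ < ε := hfg x hx

open InverseLimit in
/-- For an inverse sequence of locally compact Hausdorff spaces with
continuous proper bonding maps, every compactly supported continuous function `f` on the
inverse limit can be approximated, uniformly and with supports inside one fixed compact set
containing the support of `f`, by pullbacks of compactly supported continuous functions on
the spaces `G j` under the canonical projections.  In other words,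
`⋃ j (p_j^∞)^* (C_c(G_j))` is dense in `C_c(Ḡ)` in the inductive limit topology. -/
theorem inverseLimit_pullbacks_dense_inductiveLimitTopology
    (G : ℕ → Type*) [∀ j, TopologicalSpace (G j)]
    [∀ j, LocallyCompactSpace (G j)] [∀ j, T2Space (G j)]
    (p : ∀ j, G (j + 1) → G j) (hpc : ∀ j, Continuous (p j))
    (hpp : ∀ j, ∀ K : Set (G j), IsCompact K → IsCompact (p j ⁻¹' K))
    (f : InverseLimit G p → ℂ) (hf : Continuous f) (hfsupp : HasCompactSupport f) :
    ∃ K : Set (InverseLimit G p), IsCompact K ∧ tsupport f ⊆ K ∧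
      ∀ ε > (0 : ℝ), ∃ (j : ℕ) (g : G j → ℂ), Continuous g ∧ HasCompactSupport g ∧
        tsupport (fun x : InverseLimit G p => g (x.1 j)) ⊆ K ∧
        ∀ x : InverseLimit G p, ‖f x - g (x.1 j)‖ < ε := by
  obtain ⟨χ, hχf, -, hχ, hχ01⟩ := exists_continuous_one_zero_of_isCompact
    (hfsupp.image (continuous_proj 0)) isClosed_empty (disjoint_empty _)
  set c : G 0 → ℂ := fun t => χ t
  set K := {x : InverseLimit G p | x.1 0 ∈ tsupport c}
  have hc : HasCompactSupport c := hχ.comp_left Complex.ofReal_zero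
  have hc1 : ∀ t, ‖c t‖ ≤ 1 := fun t => by
    simpa [c, abs_of_nonneg (hχ01 t).1] using (hχ01 t).2
  have hcf : EqOn (fun x : InverseLimit G p => c (x.1 0)) 1 (tsupport f) := fun x hx => by
    simp [c, hχf (mem_image_of_mem _ hx)]
  have hfK : tsupport f ⊆ K := fun x hx =>
    subset_tsupport c fun h => one_ne_zero ((hcf hx).symm.trans h)
  refine ⟨K, isCompact_proj_zero_preimage hpc hpp hc, hfK, fun ε hε => ?_⟩
  have := isCompact_iff_compactSpace.1 (isCompact_proj_zero_preimage hpc hpp hc)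
  obtain ⟨j, g, hg⟩ := exists_level_approx K hpc ⟨fun x => f x, by fun_prop⟩ hε
  refine ⟨j, fun y => c (toLevelZero p j y) * g y, ?_, ?_, ?_, fun x => ?_⟩
  · exact ((by fun_prop : Continuous c).comp (continuous_toLevelZero hpc j)).mul g.continuous
  · exact HasCompactSupport.mul_right (f' := g) <|
      .intro (isCompact_preimage_toLevelZero hpp hc j) fun y hy =>
        image_eq_zero_of_notMem_tsupport hy
  · simp only [toLevelZero_apply]
    exact tsupport_mul_subset_left.trans
      (tsupport_comp_subset_preimage c (continuous_proj 0))
  · show ‖f x - c (toLevelZero p j (x.1 j)) * g (x.1 j)‖ < ε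
    rw [toLevelZero_apply]
    exact norm_sub_mul_lt_of_eqOn_one (g := fun z : InverseLimit G p => g (z.1 j)) hε
      (fun _ => hc1 _) (hcf.mono (subset_tsupport f)) (fun z hz => hg ⟨z, subset_tsupport _ hz⟩) x
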